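/- arXiv:1407.1786 — 7 statements merged into one kernel-verified Lean document; each statement's English description precedes it below -/
import Mathlib

section
/- Let U be an N×r complex matrix with orthonormal columns u₁, …, u_r (i.e., Uᴴ·U = I_r), let μ₁, …, μ_r be nonnegative reals, let P = U·diag(μ₁,…,μ_r)·Uᴴ, let ρ > 0, and let T be a subset of {1,…,r} of size M_p. Let S be the N×M_p matrix whose columns are √ρ·u_i for i ∈ T (each index used once). Then Sᴴ·P·S + I_{M_p} is invertible and P − P·S·(Sᴴ·P·S + I_{M_p})⁻¹·Sᴴ·P = U·diag(ν₁,…,ν_r)·Uᴴ, where ν_i = μ_i/(ρ·μ_i + 1) for i ∈ T and ν_i = μ_i for i ∉ T. In particular, the Kalman measurement update with training signals chosen among the eigenvectors of the channel covariance preserves the eigenbasis and decouples into scalar updates along the sounded directions. -/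
/-!
Writing `S = U * B` with `B = √ρ • E`, where the columns of `E` are the standard basis vectors
indexed by `e`, the isometry `U` factors out of the update: it is `U * K * Uᴴ` with `K` the update
of `D = diagonal μ` by `B`. There everything is diagonal:
`Bᴴ * D * B + 1 = diagonal (ρ μ (e j) + 1)`, and `D * B * (Bᴴ * D * B + 1)⁻¹ * Bᴴ * D` is
diagonal with entries `ρ μ i ^ 2 / (ρ μ i + 1)` on the range of `e` and `0` off it, which leaves
`μ i / (ρ μ i + 1)` resp. `μ i`.
-/

open Matrix

namespace Matrix

section Kalman

variable {R m n κ : Type*} [CommRing R] [StarRing R] [Fintype n] [DecidableEq κ]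

def innovationCov (P : Matrix n n R) (S : Matrix n κ R) : Matrix κ κ R :=
  Sᴴ * P * S + 1

noncomputable def kalmanUpdate [Fintype κ] (P : Matrix n n R) (S : Matrix n κ R) : Matrix n n R :=
  P - P * S * (innovationCov P S)⁻¹ * Sᴴ * P

variable [Fintype m] [DecidableEq n] {U : Matrix m n R}

theorem innovationCov_conj_of_isometry (hU : Uᴴ * U = 1) (D : Matrix n n R)
    (B : Matrix n κ R) :
    innovationCov (U * D * Uᴴ) (U * B) = innovationCov D B := by
  simp only [innovationCov, conjTranspose_mul, Matrix.mul_assoc, ← Matrix.mul_assoc Uᴴ U, hU,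
    Matrix.one_mul]

theorem kalmanUpdate_conj_of_isometry [Fintype κ] (hU : Uᴴ * U = 1) (D : Matrix n n R)
    (B : Matrix n κ R) :
    kalmanUpdate (U * D * Uᴴ) (U * B) = U * kalmanUpdate D B * Uᴴ := by
  rw [kalmanUpdate, kalmanUpdate, innovationCov_conj_of_isometry hU]
  simp only [conjTranspose_mul, Matrix.mul_assoc, ← Matrix.mul_assoc Uᴴ U, hU, Matrix.one_mul,
    Matrix.mul_sub, Matrix.sub_mul]

end Kalman

def columnSelection (R : Type*) {ι κ : Type*} [DecidableEq ι] [Zero R] [One R] (e : κ → ι) :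
    Matrix ι κ R :=
  (1 : Matrix ι ι R).submatrix id e

section Selection

variable {R ι κ : Type*} [Semiring R] [DecidableEq ι]

theorem mul_columnSelection {m : Type*} [Fintype ι] (A : Matrix m ι R) (e : κ → ι) :
    A * columnSelection R e = A.submatrix id e :=
  mul_submatrix_one (Equiv.refl ι) e A

theorem conjTranspose_columnSelection [StarRing R] (e : κ → ι) :
    (columnSelection R e)ᴴ = (1 : Matrix ι ι R).submatrix e id := by
  rw [columnSelection, conjTranspose_submatrix, conjTranspose_one]

theorem conjTranspose_columnSelection_mul_diagonal_mul [Fintype ι] [StarRing R] [DecidableEq κ]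
    (e : κ ↪ ι) (d : ι → R) :
    (columnSelection R e)ᴴ * diagonal d * columnSelection R e = diagonal (d ∘ e) := by
  rw [conjTranspose_columnSelection, columnSelection, ← submatrix_id_id (diagonal d),
    ← submatrix_mul _ _ _ _ _ Function.bijective_id,
    ← submatrix_mul _ _ _ _ _ Function.bijective_id, Matrix.one_mul, Matrix.mul_one,
    submatrix_diagonal_embedding]

theorem diagonal_mul_columnSelection [Fintype ι] [Fintype κ] [DecidableEq κ] (e : κ → ι)
    (d : ι → R) :
    diagonal d * columnSelection R e = columnSelection R e * diagonal (d ∘ e) := by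
  ext i j
  simp only [columnSelection, diagonal_mul, mul_diagonal, submatrix_apply, id, one_apply,
    Function.comp_apply]
  split_ifs with h <;> simp [h]

theorem conjTranspose_columnSelection_mul_diagonal [Fintype ι] [Fintype κ] [StarRing R]
    [DecidableEq κ] (e : κ → ι) (d : ι → R) :
    (columnSelection R e)ᴴ * diagonal d = diagonal (d ∘ e) * (columnSelection R e)ᴴ := by
  rw [conjTranspose_columnSelection]
  ext j i
  simp only [diagonal_mul, mul_diagonal, submatrix_apply, id, one_apply, Function.comp_apply]
  split_ifs with h <;> simp [h]

theorem columnSelection_mul_diagonal_mul_conjTranspose [Fintype κ] [DecidableEq κ] [StarRing R]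
    (e : κ ↪ ι) (h : κ → R) :
    columnSelection R e * diagonal h * (columnSelection R e)ᴴ =
      diagonal (Function.extend e h 0) := by
  rw [conjTranspose_columnSelection]
  ext i i'
  rw [mul_apply]
  simp only [columnSelection, mul_diagonal, submatrix_apply, id, one_apply, diagonal_apply]
  by_cases hi' : ∃ j, e j = i'
  · obtain ⟨j, rfl⟩ := hi'
    simp only [e.injective.eq_iff, mul_ite, ite_mul, mul_one, one_mul, mul_zero, zero_mul,
      Finset.sum_ite_eq', Finset.mem_univ, if_true]
    rcases eq_or_ne i (e j) with rfl | hij <;> simp [*, e.injective.extend_apply]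
  · have hi'' : ∀ j, e j ≠ i' := by simpa using hi'
    simp only [hi'', if_false, mul_zero, Finset.sum_const_zero]
    rcases eq_or_ne i i' with rfl | hii <;> simp [*]

end Selection

section Diagonal

variable {𝕜 ι κ : Type*} [Field 𝕜] [StarRing 𝕜] [Fintype ι] [DecidableEq ι] [DecidableEq κ]

theorem innovationCov_diagonal_smul_columnSelection (e : κ ↪ ι) (d : ι → 𝕜) (c : 𝕜) :
    innovationCov (diagonal d) (c • columnSelection 𝕜 e) =
      diagonal (fun j => star c * c * d (e j) + 1) := by
  rw [innovationCov, conjTranspose_smul, Matrix.smul_mul, Matrix.smul_mul, Matrix.mul_smul,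
    smul_smul, conjTranspose_columnSelection_mul_diagonal_mul, ← diagonal_smul, ← diagonal_one,
    diagonal_add]
  rfl

theorem kalmanUpdate_diagonal_smul_columnSelection [Fintype κ] (e : κ ↪ ι) (d : ι → 𝕜) (c : 𝕜)
    (hd : ∀ j, star c * c * d (e j) + 1 ≠ 0) :
    kalmanUpdate (diagonal d) (c • columnSelection 𝕜 e) =
      diagonal (fun i => if i ∈ Set.range e then d i / (star c * c * d i + 1) else d i) := by
  set a : κ → 𝕜 := fun j => star c * c * d (e j) + 1
  have hinv : (diagonal a)⁻¹ = diagonal a⁻¹ := inv_eq_right_inv <| by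
    rw [diagonal_mul_diagonal, ← diagonal_one]
    exact congrArg diagonal (funext fun j => mul_inv_cancel₀ (hd j))
  have hcorr : diagonal d * (c • columnSelection 𝕜 e) * (diagonal a)⁻¹ *
      (c • columnSelection 𝕜 e)ᴴ * diagonal d =
      (star c * c) • diagonal (Function.extend e (fun j => d (e j) * ((a j)⁻¹ * d (e j))) 0) := by
    rw [hinv, ← columnSelection_mul_diagonal_mul_conjTranspose, conjTranspose_smul]
    simp only [Matrix.smul_mul, Matrix.mul_smul, smul_smul, Matrix.mul_assoc,
      conjTranspose_columnSelection_mul_diagonal]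
    rw [← Matrix.mul_assoc (diagonal d), diagonal_mul_columnSelection, Matrix.mul_assoc,
      ← Matrix.mul_assoc (diagonal a⁻¹), ← Matrix.mul_assoc (diagonal (d ∘ e)),
      diagonal_mul_diagonal, diagonal_mul_diagonal]
    rfl
  rw [kalmanUpdate, innovationCov_diagonal_smul_columnSelection, hcorr, ← diagonal_smul,
    diagonal_sub]
  congr 1
  ext i
  by_cases hi : i ∈ Set.range e
  · obtain ⟨j, rfl⟩ := hi
    simp only [Set.mem_range_self, if_true, Pi.smul_apply, smul_eq_mul,
      e.injective.extend_apply, a, div_eq_mul_inv]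
    linear_combination (-d (e j)) * inv_mul_cancel₀ (hd j)
  · simp [hi, Function.extend_apply' _ _ _ hi]

end Diagonal

end Matrix

/-- Kalman measurement update with eigenvector training signals preserves the
eigenbasis and decouples into scalar updates along the sounded directions. -/
theorem kalman_measurement_update_eigenbasis
    {N r Mp : ℕ}
    (U : Matrix (Fin N) (Fin r) ℂ) (hU : Uᴴ * U = 1)
    (μ : Fin r → ℝ) (hμ : ∀ i, 0 ≤ μ i)
    (ρ : ℝ) (hρ : 0 < ρ)
    (e : Fin Mp ↪ Fin r)
    (P : Matrix (Fin N) (Fin N) ℂ)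
    (hP : P = U * Matrix.diagonal (fun i => (μ i : ℂ)) * Uᴴ)
    (S : Matrix (Fin N) (Fin Mp) ℂ)
    (hS : S = Matrix.of fun i j => (Real.sqrt ρ : ℂ) * U i (e j)) :
    IsUnit (Sᴴ * P * S + 1) ∧
    P - P * S * (Sᴴ * P * S + 1)⁻¹ * Sᴴ * P =
      U * Matrix.diagonal (fun i =>
        if i ∈ Set.range e then ((μ i / (ρ * μ i + 1) : ℝ) : ℂ) else ((μ i : ℝ) : ℂ)) * Uᴴ := by
  set c : ℂ := (Real.sqrt ρ : ℂ)
  have hc : star c * c = ρ := by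
    rw [Complex.star_def, Complex.conj_ofReal, ← Complex.ofReal_mul, Real.mul_self_sqrt hρ.le]
  have hS' : S = U * (c • columnSelection ℂ e) := by
    rw [hS, Matrix.mul_smul, mul_columnSelection]
    rfl
  have hcov : ∀ i, star c * c * (μ i : ℂ) + 1 ≠ 0 := fun i => by
    rw [hc]
    exact_mod_cast (add_pos_of_nonneg_of_pos (mul_nonneg hρ.le (hμ i)) one_pos).ne'
  subst hP hS'
  refine ⟨?_, ?_⟩
  · change IsUnit (innovationCov _ _)
    rw [innovationCov_conj_of_isometry hU, innovationCov_diagonal_smul_columnSelection,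
      isUnit_diagonal, Pi.isUnit_iff]
    exact fun j => (hcov (e j)).isUnit
  · change kalmanUpdate _ _ = _
    rw [kalmanUpdate_conj_of_isometry hU,
      kalmanUpdate_diagonal_smul_columnSelection _ _ _ fun j => hcov (e j), hc]
    congr 3
    ext i
    split_ifs <;> push_cast <;> rfl
end

section
/- Let a ∈ (0,1), λ > 0, ρ > 0, and let g ≥ 1 be an integer. Then λ*(g) satisfies the steady-state Riccati fixed-point equation λ*(g) = (a^{2g}·λ*(g) + (1−a^{2g})·λ) / (ρ·(a^{2g}·λ*(g) + (1−a^{2g})·λ) + 1); that is, λ*(g) is a fixed point of the g-block Riccati map f_g. -/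
/-- Minimum steady-state MSE along a sounded eigen-direction. -/
noncomputable def lamStar (a lam ρ : ℝ) (g : ℕ) : ℝ :=
  lam / ((1/2)*(1+lam*ρ) + Real.sqrt (((1/2)*(1+lam*ρ))^2 + (a^(2*g)/(1-a^(2*g)))*(lam*ρ)))

/-- The g-block Riccati map. -/
noncomputable def riccatiMap (a lam ρ : ℝ) (g : ℕ) (x : ℝ) : ℝ :=
  (a^(2*g)*x + (1-a^(2*g))*lam) / (ρ*(a^(2*g)*x + (1-a^(2*g))*lam) + 1)

/-- λ*(g) is a fixed point of the g-block Riccati map. -/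
theorem lamStar_is_fixed_point
    (a lam ρ : ℝ) (ha0 : 0 < a) (ha1 : a < 1) (hlam : 0 < lam) (hρ : 0 < ρ)
    (g : ℕ) (hg : 1 ≤ g) :
    riccatiMap a lam ρ g (lamStar a lam ρ g) = lamStar a lam ρ g := by
  rw [riccatiMap, lamStar]
  set b : ℝ := a^(2*g) with hbdef
  have hb0 : 0 < b := pow_pos ha0 _
  have hb1 : b < 1 := pow_lt_one₀ ha0.le ha1 (by omega)
  clear_value b
  have h1b : 0 < 1 - b := by linarith
  have hE0 : (0:ℝ) ≤ ((1/2)*(1+lam*ρ))^2 + (b/(1-b))*(lam*ρ) := by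
    have h1 : 0 < b/(1-b) := div_pos hb0 h1b
    have h2 : 0 < lam * ρ := mul_pos hlam hρ
    positivity
  set S : ℝ := Real.sqrt (((1/2)*(1+lam*ρ))^2 + (b/(1-b))*(lam*ρ)) with hSdef
  have hS0 : 0 ≤ S := Real.sqrt_nonneg _
  have hS2 : (1-b)*S^2 = (1-b)*((1/2)*(1+lam*ρ))^2 + b*(lam*ρ) := by
    rw [hSdef, Real.sq_sqrt hE0]; field_simp
  clear_value S
  have hmρ : 0 < lam*ρ := mul_pos hlam hρ
  have hD0 : 0 < (1/2)*(1+lam*ρ) + S := by nlinarith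
  have hx0 : 0 < lam / ((1/2)*(1+lam*ρ) + S) := div_pos hlam hD0
  have hden : 0 < ρ*(b*(lam / ((1/2)*(1+lam*ρ) + S)) + (1-b)*lam) + 1 := by
    have : 0 < b*(lam / ((1/2)*(1+lam*ρ) + S)) + (1-b)*lam := by positivity
    nlinarith
  rw [div_eq_div_iff (ne_of_gt hden) (ne_of_gt hD0)]
  field_simp
  nlinarith [hS2, sq_nonneg S, sq_nonneg (1+lam*ρ)]
end

section
/- Let a ∈ (0,1), λ > 0, ρ > 0, and let g ≥ 1 be an integer. Then λ*(g) is the unique nonnegative real number x satisfying x = (a^{2g}·x + (1−a^{2g})·λ) / (ρ·(a^{2g}·x + (1−a^{2g})·λ) + 1); i.e., the g-block Riccati map f_g has exactly one fixed point in [0, ∞), namely λ*(g). -/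
/-- λ*(g) is the unique nonnegative fixed point of the g-block Riccati map. -/
theorem lamStar_unique_nonneg_fixed_point
    (a lam ρ : ℝ) (ha0 : 0 < a) (ha1 : a < 1) (hlam : 0 < lam) (hρ : 0 < ρ)
    (g : ℕ) (hg : 1 ≤ g) :
    0 ≤ lamStar a lam ρ g ∧
    riccatiMap a lam ρ g (lamStar a lam ρ g) = lamStar a lam ρ g ∧
    ∀ x : ℝ, 0 ≤ x → riccatiMap a lam ρ g x = x → x = lamStar a lam ρ g := by
  have hb0 : 0 < a^(2*g) := pow_pos ha0 _
  have hb1 : a^(2*g) < 1 := pow_lt_one₀ ha0.le ha1 (by omega)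
  set b := a^(2*g) with hbdef
  have h1b : 0 < 1 - b := by linarith
  set c := (1/2)*(1+lam*ρ) with hcdef
  have hc : 0 < c := by
    have : 0 < lam * ρ := mul_pos hlam hρ
    simp only [hcdef]; nlinarith
  have hrad : 0 ≤ c^2 + (b/(1-b))*(lam*ρ) := by
    have h1 : 0 ≤ b/(1-b) := le_of_lt (div_pos hb0 h1b)
    have h2 : 0 < lam * ρ := mul_pos hlam hρ
    nlinarith
  set s := Real.sqrt (c^2 + (b/(1-b))*(lam*ρ)) with hsdef
  have hs0 : 0 ≤ s := Real.sqrt_nonneg _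
  have hs2 : s^2 = c^2 + (b/(1-b))*(lam*ρ) := Real.sq_sqrt hrad
  have hS : 0 < c + s := by linarith
  have hLdef : lamStar a lam ρ g = lam / (c + s) := rfl
  have hL0 : 0 < lamStar a lam ρ g := by
    rw [hLdef]; exact div_pos hlam hS
  set L := lamStar a lam ρ g with hLset
  clear_value L s c b
  have hs2' : (1-b)*s^2 = (1-b)*c^2 + b*(lam*ρ) := by
    rw [hs2]; field_simp
  have hLe : L * (c + s) = lam := by
    rw [hLdef]; exact div_mul_cancel₀ lam hS.ne'
  have key : ρ*b*lam^2 + (ρ*(1-b)*lam + 1 - b)*lam*(c+s) - (1-b)*lam*(c+s)^2 = 0 := by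
    linear_combination (-lam)*hs2' + (-2*lam*(c+s)*(1-b))*hcdef
  -- L satisfies the quadratic
  have QL : ρ*b*L^2 + (ρ*(1-b)*lam + 1 - b)*L - (1-b)*lam = 0 := by
    have h2 : ((c+s)^2) ≠ 0 := pow_ne_zero 2 hS.ne'
    apply mul_left_cancel₀ h2
    rw [mul_zero]
    linear_combination key + (ρ*b*(L*(c+s)+lam) + (ρ*(1-b)*lam+1-b)*(c+s)) * hLe
  have hfix : riccatiMap a lam ρ g L = L := by
    have hD : 0 < ρ*(b*L + (1-b)*lam) + 1 := by
      have : 0 ≤ b * L := le_of_lt (mul_pos hb0 hL0)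
      nlinarith [mul_pos h1b hlam]
    unfold riccatiMap
    rw [← hbdef, div_eq_iff (ne_of_gt hD)]
    linear_combination -QL
  refine ⟨hL0.le, hfix, ?_⟩
  intro x hx hfx
  have hD : 0 < ρ*(b*x + (1-b)*lam) + 1 := by
    have : 0 ≤ b * x := mul_nonneg hb0.le hx
    nlinarith [mul_pos h1b hlam]
  unfold riccatiMap at hfx
  rw [← hbdef, div_eq_iff (ne_of_gt hD)] at hfx
  have Qx : ρ*b*x^2 + (ρ*(1-b)*lam + 1 - b)*x - (1-b)*lam = 0 := by linear_combination -hfx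
  have hfac : (x - L) * (ρ*b*(x+L) + (ρ*(1-b)*lam + 1 - b)) = 0 := by
    linear_combination Qx - QL
  have hpos : 0 < ρ*b*(x+L) + (ρ*(1-b)*lam + 1 - b) := by
    have h1 : 0 ≤ ρ*b*(x+L) :=
      mul_nonneg (mul_nonneg hρ.le hb0.le) (by linarith)
    have h2 := mul_pos (mul_pos hρ h1b) hlam
    linarith
  have := mul_eq_zero.mp hfac
  rcases this with h | h
  · linarith
  · linarith
end

section
/- Let a ∈ (0,1), λ > 0, ρ > 0, and let g ≥ 1 be an integer. Then the g-block Riccati map f_g is a contraction on [0, ∞) with contraction constant a^{2g}: for all x, y ≥ 0, |f_g(x) − f_g(y)| ≤ a^{2g}·|x − y|. -/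
/-- The g-block Riccati map is a contraction on [0, ∞) with constant a^(2g). -/
theorem riccatiMap_contraction
    (a lam ρ : ℝ) (ha0 : 0 < a) (ha1 : a < 1) (hlam : 0 < lam) (hρ : 0 < ρ)
    (g : ℕ) (hg : 1 ≤ g) :
    ∀ x y : ℝ, 0 ≤ x → 0 ≤ y →
      |riccatiMap a lam ρ g x - riccatiMap a lam ρ g y| ≤ a^(2*g) * |x - y| := by
  intro x y hx hy
  set A := a^(2*g) with hA
  have hA0 : 0 < A := pow_pos ha0 _
  have hA1 : A ≤ 1 := pow_le_one₀ ha0.le ha1.le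
  have hB : 0 ≤ (1 - A) * lam := mul_nonneg (by linarith) hlam.le
  set u := A*x + (1-A)*lam with hu
  set v := A*y + (1-A)*lam with hv
  have hu0 : 0 ≤ u := add_nonneg (mul_nonneg hA0.le hx) hB
  have hv0 : 0 ≤ v := add_nonneg (mul_nonneg hA0.le hy) hB
  have hdu : (1:ℝ) ≤ ρ*u + 1 := by nlinarith
  have hdv : (1:ℝ) ≤ ρ*v + 1 := by nlinarith
  have hdu0 : ρ*u + 1 ≠ 0 := by linarith
  have hdv0 : ρ*v + 1 ≠ 0 := by linarith
  have key : riccatiMap a lam ρ g x - riccatiMap a lam ρ g y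
      = A*(x-y) / ((ρ*u+1)*(ρ*v+1)) := by
    simp only [riccatiMap, ← hA, ← hu, ← hv]
    field_simp
    ring
  rw [key, abs_div, abs_mul]
  have hD : 1 ≤ |(ρ*u+1)*(ρ*v+1)| := by
    rw [abs_of_nonneg (by nlinarith)]
    nlinarith
  calc |A| * |x-y| / |(ρ*u+1)*(ρ*v+1)| ≤ |A| * |x-y| :=
      div_le_self (mul_nonneg (abs_nonneg A) (abs_nonneg (x-y))) hD
    _ = A * |x-y| := by rw [abs_of_pos hA0]
end

section
/- Let a ∈ (0,1), λ > 0, ρ > 0, and let g, g′ be integers with 1 ≤ g′ ≤ g. Then λ*(g′) ≤ λ*(g); that is, the minimum steady-state MSE λ*(g) is a monotone increasing function of the block time-wise sounding interval g. -/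
/-- The minimum steady-state MSE λ*(g) is monotone increasing in g. -/
theorem lamStar_monotone
    (a lam ρ : ℝ) (ha0 : 0 < a) (ha1 : a < 1) (hlam : 0 < lam) (hρ : 0 < ρ)
    (g g' : ℕ) (hg' : 1 ≤ g') (hgg : g' ≤ g) :
    lamStar a lam ρ g' ≤ lamStar a lam ρ g := by
  unfold lamStar
  set B : ℝ := (1/2)*(1+lam*ρ) with hB
  have hBpos : 0 < B := by positivity
  set t : ℝ := a^(2*g) with htdef
  set t' : ℝ := a^(2*g') with ht'def
  have ht0 : 0 < t := pow_pos ha0 _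
  have ht'0 : 0 < t' := pow_pos ha0 _
  have ht1 : t < 1 := pow_lt_one₀ ha0.le ha1 (by omega)
  have ht'1 : t' < 1 := pow_lt_one₀ ha0.le ha1 (by omega)
  have htt : t ≤ t' := pow_le_pow_of_le_one ha0.le ha1.le (by omega)
  have hc : t/(1-t) ≤ t'/(1-t') := by
    rw [div_le_div_iff₀ (by linarith) (by linarith)]
    nlinarith
  have hsq : Real.sqrt (B^2 + (t/(1-t))*(lam*ρ)) ≤
      Real.sqrt (B^2 + (t'/(1-t'))*(lam*ρ)) := by
    apply Real.sqrt_le_sqrt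
    have := mul_le_mul_of_nonneg_right hc (by positivity : (0:ℝ) ≤ lam*ρ)
    linarith
  have hden : 0 < B + Real.sqrt (B^2 + (t/(1-t))*(lam*ρ)) := by
    have := Real.sqrt_nonneg (B^2 + (t/(1-t))*(lam*ρ))
    linarith
  exact div_le_div_of_nonneg_left hlam.le hden (by linarith)
end

section
/- Let p be a prime, s a natural number, and G = p^s. Let g₁ ≤ g₂ ≤ … ≤ g_m be positive integers arranged in ascending order, each dividing G, such that Σ_{i=1}^{m} G/g_i = G. Then there exist residues r₁, …, r_m with 0 ≤ r_i < g_i for each i, such that the residue classes {q ∈ {0,1,…,G−1} : q ≡ r_i (mod g_i)}, i = 1,…,m, are pairwise disjoint and their union is all of {0,1,…,G−1}; equivalently, for every q ∈ {0,…,G−1} there is exactly one index i with q ≡ r_i (mod g_i). -/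
/-- base-`p` digit reversal of the lowest `a` digits. -/
private def rev (p : ℕ) : ℕ → ℕ → ℕ
  | 0, _ => 0
  | a+1, t => (t % p) * p ^ a + rev p a (t / p)

private lemma rev_lt (p : ℕ) (hp : 2 ≤ p) : ∀ a t, rev p a t < p ^ a := by
  intro a
  induction a with
  | zero => intro t; simp [rev]
  | succ a ih =>
    intro t
    have h1 : t % p < p := Nat.mod_lt _ (by omega)
    have h2 : rev p a (t / p) < p ^ a := ih _
    calc (t % p) * p ^ a + rev p a (t / p) < (t % p) * p ^ a + p ^ a := by omega
      _ = (t % p + 1) * p ^ a := by ring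
      _ ≤ p * p ^ a := Nat.mul_le_mul_right _ (by omega)
      _ = p ^ (a + 1) := by ring

private lemma rev_mod (p : ℕ) (hp : 2 ≤ p) :
    ∀ b a t, rev p (a + b) t % p ^ a = rev p a (t / p ^ b) := by
  intro b
  induction b with
  | zero => intro a t; simpa using Nat.mod_eq_of_lt (rev_lt p hp a t)
  | succ b ih =>
    intro a t
    have h : a + (b + 1) = (a + b) + 1 := by omega
    rw [h]
    show ((t % p) * p ^ (a + b) + rev p (a + b) (t / p)) % p ^ a = _
    have hd : p ^ a ∣ (t % p) * p ^ (a + b) :=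
      Dvd.dvd.mul_left (pow_dvd_pow p (by omega)) _
    have e1 : (t % p) * p ^ (a + b) = ((t % p) * p ^ b) * p ^ a := by
      rw [pow_add, mul_comm (p ^ a), mul_assoc]
    rw [e1, mul_comm (t % p * p ^ b), Nat.mul_add_mod, ih a (t / p),
      Nat.div_div_eq_div_mul, ← pow_succ']

private lemma rev_inj (p : ℕ) (hp : 2 ≤ p) :
    ∀ a u t, u < p ^ a → t < p ^ a → rev p a u = rev p a t → u = t := by
  intro a
  induction a with
  | zero => intro u t hu ht _; simp at hu ht; omega
  | succ a ih =>
    intro u t hu ht heq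
    have hu' : rev p a (u / p) < p ^ a := rev_lt p hp a _
    have ht' : rev p a (t / p) < p ^ a := rev_lt p hp a _
    have heq' : (u % p) * p ^ a + rev p a (u / p) = (t % p) * p ^ a + rev p a (t / p) := heq
    have hmod : rev p a (u / p) = rev p a (t / p) := by
      have h1 : (u % p * p ^ a + rev p a (u / p)) % p ^ a
          = (t % p * p ^ a + rev p a (t / p)) % p ^ a := by rw [heq']
      rwa [mul_comm (u % p), Nat.mul_add_mod, mul_comm (t % p), Nat.mul_add_mod,
        Nat.mod_eq_of_lt hu', Nat.mod_eq_of_lt ht'] at h1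
    have hx : (u % p) * p ^ a = (t % p) * p ^ a := by omega
    have hxx : u % p = t % p := Nat.eq_of_mul_eq_mul_right (by positivity) hx
    have hud : u / p < p ^ a := Nat.div_lt_iff_lt_mul (by omega) |>.mpr (by
      rw [← pow_succ]; exact hu)
    have htd : t / p < p ^ a := Nat.div_lt_iff_lt_mul (by omega) |>.mpr (by
      rw [← pow_succ]; exact ht)
    have hdiv := ih (u / p) (t / p) hud htd hmod
    rw [← Nat.div_add_mod u p, ← Nat.div_add_mod t p, hdiv, hxx]

private lemma card_filter_mod (n d r : ℕ) (hdvd : d ∣ n) (hr : r < d) :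
    ((Finset.range n).filter (fun q => q % d = r)).card = n / d := by
  have hd : 0 < d := by omega
  rw [← Finset.card_range (n / d)]
  apply Finset.card_bij' (fun q _ => q / d) (fun k _ => r + k * d)
  · intro q hq
    simp only [Finset.mem_filter, Finset.mem_range] at hq
    exact Finset.mem_range.mpr (Nat.div_lt_div_of_lt_of_dvd hdvd hq.1)
  · intro k hk
    simp only [Finset.mem_range] at hk
    have h1 : (k + 1) * d ≤ n := by rw [← Nat.le_div_iff_mul_le hd]; omega
    simp only [Finset.mem_filter, Finset.mem_range]
    constructor
    · calc r + k * d < d + k * d := by omega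
        _ = (k + 1) * d := by ring
        _ ≤ n := h1
    · rw [Nat.add_mul_mod_self_right, Nat.mod_eq_of_lt hr]
  · intro q hq
    simp only [Finset.mem_filter, Finset.mem_range] at hq
    rw [← hq.2]
    exact Nat.mod_add_div' q d
  · intro k _
    rw [Nat.add_mul_div_right _ _ hd, Nat.div_eq_of_lt hr, zero_add]


/-- For G = p^s and divisors g₁ ≤ … ≤ g_m of G with Σ G/gᵢ = G, the residue
classes can be chosen pairwise disjoint with union all of {0,…,G−1}: every
q < G lies in exactly one residue class q ≡ rᵢ (mod gᵢ). -/
theorem residue_class_partition_of_prime_power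
    (p : ℕ) (hp : p.Prime) (s : ℕ) (G : ℕ) (hG : G = p ^ s)
    (m : ℕ) (g : Fin m → ℕ)
    (hpos : ∀ i, 1 ≤ g i)
    (hmono : ∀ i j : Fin m, i ≤ j → g i ≤ g j)
    (hdvd : ∀ i, g i ∣ G)
    (hsum : ∑ i, G / g i = G) :
    ∃ r : Fin m → ℕ, (∀ i, r i < g i) ∧
      ∀ q : ℕ, q < G → ∃! i : Fin m, q % g i = r i := by
  subst hG
  have hp2 : 2 ≤ p := hp.two_le
  have hppos : 0 < p := by omega
  choose a has hga using fun i => (Nat.dvd_prime_pow hp).mp (hdvd i)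
  set S : Fin m → ℕ := fun i =>
    ∑ j ∈ Finset.univ.filter (fun j => j < i), p ^ s / g j with hS
  have hLpow : ∀ i, p ^ s / g i = p ^ (s - a i) := fun i => by
    rw [hga i, Nat.pow_div (has i) hppos]
  have hLpos : ∀ i, 0 < p ^ s / g i := fun i => by
    rw [hLpow i]; positivity
  have hamono : ∀ i j : Fin m, i ≤ j → a i ≤ a j := by
    intro i j hij
    have h := hmono i j hij
    rw [hga i, hga j] at h
    exact (Nat.pow_le_pow_iff_right hp.one_lt).mp h
  have hSdvd : ∀ i, p ^ (s - a i) ∣ S i := by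
    intro i
    apply Finset.dvd_sum
    intro k hk
    have hk' : k < i := by simpa using hk
    rw [hLpow k]
    exact pow_dvd_pow p (by have := hamono k i hk'.le; have := has i; omega)
  have hSstep : ∀ i j : Fin m, i < j → S i + p ^ s / g i ≤ S j := by
    intro i j hij
    have hnot : i ∉ Finset.univ.filter (fun k : Fin m => k < i) := by simp
    have hsub : insert i (Finset.univ.filter (fun k : Fin m => k < i)) ⊆
        Finset.univ.filter (fun k : Fin m => k < j) := by
      intro k hk
      simp only [Finset.mem_insert, Finset.mem_filter, Finset.mem_univ, true_and] at hk ⊢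
      rcases hk with rfl | h
      · exact hij
      · exact h.trans hij
    calc S i + p ^ s / g i
        = ∑ k ∈ insert i (Finset.univ.filter (fun k : Fin m => k < i)), p ^ s / g k := by
          rw [Finset.sum_insert hnot]; ring
      _ ≤ S j := Finset.sum_le_sum_of_subset hsub
  have hSlt : ∀ j, S j < p ^ s := by
    intro j
    have hnot : j ∉ Finset.univ.filter (fun k : Fin m => k < j) := by simp
    have h1 : p ^ s / g j + S j ≤ ∑ k, p ^ s / g k := by
      have h2 : ∑ k ∈ insert j (Finset.univ.filter (fun k : Fin m => k < j)), p ^ s / g k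
          ≤ ∑ k, p ^ s / g k := Finset.sum_le_sum_of_subset (Finset.subset_univ _)
      rw [Finset.sum_insert hnot] at h2
      exact h2
    rw [hsum] at h1
    have := hLpos j
    omega
  set r : Fin m → ℕ := fun i => rev p (a i) (S i / p ^ (s - a i)) with hr
  have hrlt : ∀ i, r i < g i := fun i => by
    rw [hga i]; exact rev_lt p hp2 (a i) _
  have hdivlt : ∀ i j : Fin m, S j / p ^ (s - a i) < p ^ (a i) := by
    intro i j
    rw [Nat.div_lt_iff_lt_mul (by positivity), ← pow_add]
    have h : a i + (s - a i) = s := by have := has i; omega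
    rw [h]
    exact hSlt j
  have key : ∀ i j : Fin m, i < j → ∀ q : ℕ,
      q % g i = r i → q % g j = r j → False := by
    intro i j hij q hqi hqj
    have haij : a i ≤ a j := hamono i j hij.le
    have hgij : g i ∣ g j := by rw [hga i, hga j]; exact pow_dvd_pow p haij
    have h1 : q % g i = (q % g j) % g i := (Nat.mod_mod_of_dvd q hgij).symm
    rw [hqi, hqj, hga i] at h1
    have hsplit : a i + (a j - a i) = a j := by omega
    have hexp : (s - a j) + (a j - a i) = s - a i := by have := has j; omega
    have h2 : r j % p ^ (a i) = rev p (a i) (S j / p ^ (s - a i)) := by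
      have hrm := rev_mod p hp2 (a j - a i) (a i) (S j / p ^ (s - a j))
      rw [hsplit] at hrm
      rw [hr]
      show rev p (a j) (S j / p ^ (s - a j)) % p ^ (a i) = _
      rw [hrm, Nat.div_div_eq_div_mul, ← pow_add, hexp]
    rw [h2] at h1
    have h3 : S i / p ^ (s - a i) = S j / p ^ (s - a i) :=
      rev_inj p hp2 (a i) _ _ (hdivlt i i) (hdivlt i j) h1
    obtain ⟨c, hc⟩ := hSdvd i
    have hP : 0 < p ^ (s - a i) := by positivity
    have e1 : S i / p ^ (s - a i) = c := by
      rw [hc, Nat.mul_div_cancel_left c hP]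
    have hst := hSstep i j hij
    rw [hLpow i] at hst
    have e2 : c + 1 ≤ S j / p ^ (s - a i) := by
      rw [Nat.le_div_iff_mul_le hP, add_mul, one_mul]
      have : c * p ^ (s - a i) = S i := by rw [hc]; ring
      omega
    omega
  refine ⟨r, hrlt, ?_⟩
  intro q hq
  set C : Fin m → Finset ℕ :=
    fun i => (Finset.range (p ^ s)).filter (fun x => x % g i = r i) with hC
  have hcard : ∀ i, (C i).card = p ^ s / g i := fun i =>
    card_filter_mod (p ^ s) (g i) (r i) (hdvd i) (hrlt i)
  have hdisj : ∀ i ∈ (Finset.univ : Finset (Fin m)), ∀ j ∈ Finset.univ,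
      i ≠ j → Disjoint (C i) (C j) := by
    intro i _ j _ hij
    rw [Finset.disjoint_left]
    intro x hxi hxj
    simp only [hC, Finset.mem_filter, Finset.mem_range] at hxi hxj
    rcases lt_or_gt_of_ne hij with h | h
    · exact key i j h x hxi.2 hxj.2
    · exact key j i h x hxj.2 hxi.2
  have hcardU : (Finset.univ.biUnion C).card = p ^ s := by
    rw [Finset.card_biUnion hdisj]
    simpa [hcard] using hsum
  have hsubU : Finset.univ.biUnion C ⊆ Finset.range (p ^ s) :=
    Finset.biUnion_subset.mpr fun i _ => Finset.filter_subset _ _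
  have hequ : Finset.univ.biUnion C = Finset.range (p ^ s) :=
    Finset.eq_of_subset_of_card_le hsubU (by rw [hcardU, Finset.card_range])
  have hqmem : q ∈ Finset.univ.biUnion C := by
    rw [hequ]; exact Finset.mem_range.mpr hq
  obtain ⟨i, -, hi⟩ := Finset.mem_biUnion.mp hqmem
  simp only [hC, Finset.mem_filter, Finset.mem_range] at hi
  refine ⟨i, hi.2, fun j hj => ?_⟩
  by_contra hne
  rcases lt_or_gt_of_ne hne with h | h
  · exact key j i h q hj hi.2
  · exact key i j h q hi.2 hj
end

section
/- (Proposition 3) Let p be a prime, s a natural number, G = p^s, and let M_p and n_d be positive integers. Let g₁ ≤ g₂ ≤ … ≤ g_{n_d} be positive integers arranged in ascending order, each dividing G, such that Σ_{i=1}^{n_d} 1/g_i = M_p (equivalently Σ_{i=1}^{n_d} G/g_i = G·M_p). Then there exist a column assignment col : {1,…,n_d} → {1,…,M_p} and residues r₁, …, r_{n_d} with 0 ≤ r_i < g_i, such that for every pair (q, j) with q ∈ {0,…,G−1} and j ∈ {1,…,M_p} there is exactly one index i with col(i) = j and q ≡ r_i (mod g_i). That is, a G×M_p training sequence matrix C can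 be constructed in which training signal i occupies exactly the cells in column col(i) whose row indices are congruent to r_i modulo g_i, and every cell of C is filled by exactly one training signal. -/
/-!
Lay the training signals one after another along a line of length `G * M_p`, signal `i`
taking a segment of length `G / gᵢ`. Since the `gᵢ` ascend and are powers of `p`, each segment
starts at a multiple of its own length, so it never straddles two columns of length `G = p ^ s`.
Within a column, let cell `q` sit at position `rev q`, the base-`p` digit reversal of `q` on `s`
digits. A segment of length `p ^ u` starting at `a * p ^ u` then consists of the cells whose last
`s - u` digits are those of `rev a`, i.e. of one residue class modulo `p ^ (s - u) = gᵢ`.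
-/

/-- `digitRev p t a` reverses the `t` lowest base-`p` digits of `a`. -/
def digitRev (p : ℕ) : ℕ → ℕ → ℕ
  | 0, _ => 0
  | t + 1, a => digitRev p t (a / p) + a % p * p ^ t

section digitRev

variable {p : ℕ}

theorem digitRev_lt (hp : 0 < p) : ∀ t a, digitRev p t a < p ^ t
  | 0, _ => by simp [digitRev]
  | t + 1, a => by
    have := digitRev_lt hp t (a / p)
    have : a % p + 1 ≤ p := Nat.mod_lt a hp
    calc digitRev p t (a / p) + a % p * p ^ t < (a % p + 1) * p ^ t := by linarith
      _ ≤ p ^ (t + 1) := by rw [pow_succ']; gcongr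

theorem digitRev_one (a : ℕ) : digitRev p 1 a = a % p := by
  simp [digitRev]

theorem digitRev_add : ∀ t u q,
    digitRev p (t + u) q = digitRev p u (q / p ^ t) + digitRev p t (q % p ^ t) * p ^ u
  | 0, u, q => by simp [digitRev]
  | t + 1, u, q => by
    rw [Nat.add_right_comm, digitRev, digitRev, digitRev_add t u (q / p), Nat.div_div_eq_div_mul,
      ← Nat.mod_mul_right_div_self, ← pow_succ',
      Nat.mod_mod_of_dvd _ (dvd_pow_self p t.succ_ne_zero)]
    ring

theorem digitRev_digitRev (hp : 0 < p) : ∀ {t a}, a < p ^ t → digitRev p t (digitRev p t a) = a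
  | 0, a, ha => by simp_all [digitRev]
  | t + 1, a, ha => by
    have hhigh : a / p ^ t < p := Nat.div_lt_of_lt_mul (by rwa [← pow_succ])
    have hsplit : digitRev p (t + 1) a = a / p ^ t + digitRev p t (a % p ^ t) * p := by
      rw [digitRev_add, digitRev_one, pow_one, Nat.mod_eq_of_lt hhigh]
    rw [hsplit, digitRev, Nat.add_mul_div_right _ _ hp, Nat.div_eq_of_lt hhigh, zero_add,
      Nat.add_mul_mod_self_right, Nat.mod_eq_of_lt hhigh,
      digitRev_digitRev hp (Nat.mod_lt a (pow_pos hp t)), Nat.mod_add_div']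

theorem mod_pow_eq_digitRev_iff (hp : 0 < p) {t u s a q : ℕ} (htu : t + u = s) (ha : a < p ^ t) :
    q % p ^ t = digitRev p t a ↔ digitRev p s q / p ^ u = a := by
  have hlead : digitRev p s q / p ^ u = digitRev p t (q % p ^ t) := by
    rw [← htu, digitRev_add, Nat.add_mul_div_right _ _ (pow_pos hp u),
      Nat.div_eq_of_lt (digitRev_lt hp _ _), zero_add]
  rw [hlead]
  constructor
  · intro h
    rw [h, digitRev_digitRev hp ha]
  · rintro rfl
    rw [digitRev_digitRev hp (Nat.mod_lt q (pow_pos hp t))]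

end digitRev

theorem Nat.div_eq_div_iff_div_mul_and_mod_mul_div (a b n k : ℕ) :
    a / n = b / n ↔ a / (n * k) = b / (n * k) ∧ a % (n * k) / n = b % (n * k) / n := by
  rw [Nat.ext_div_mod_iff k, Nat.div_div_eq_div_mul, Nat.div_div_eq_div_mul,
    Nat.mod_mul_right_div_self, Nat.mod_mul_right_div_self]

theorem Nat.div_eq_div_iff_of_dvd {n S x : ℕ} (hn : 0 < n) (hS : n ∣ S) :
    x / n = S / n ↔ S ≤ x ∧ x < S + n := by
  obtain ⟨c, rfl⟩ := hS
  rw [Nat.mul_div_cancel_left c hn, Nat.div_eq_iff hn, Nat.mul_comm c n]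
  omega

/-- Cell `q` of column `j` sits at position `j * p ^ s + digitRev p s q` of the line. -/
theorem segment_mem_iff {p t u s S j q : ℕ} (hp : 0 < p) (htu : t + u = s) (hS : p ^ u ∣ S) :
    (S / p ^ s = j ∧ q % p ^ t = digitRev p t (S % p ^ s / p ^ u)) ↔
      S ≤ j * p ^ s + digitRev p s q ∧ j * p ^ s + digitRev p s q < S + p ^ u := by
  have hN : p ^ s = p ^ u * p ^ t := by rw [← pow_add, add_comm, htu]
  have hrev := digitRev_lt hp s q
  have hcol : (j * p ^ s + digitRev p s q) / p ^ s = j := by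
    rw [Nat.mul_comm, Nat.mul_add_div (pow_pos hp s), Nat.div_eq_of_lt hrev, add_zero]
  have hrow : (j * p ^ s + digitRev p s q) % p ^ s = digitRev p s q := by
    rw [Nat.mul_comm, Nat.mul_add_mod, Nat.mod_eq_of_lt hrev]
  have hpos : S % p ^ s / p ^ u < p ^ t :=
    Nat.div_lt_of_lt_mul (hN ▸ Nat.mod_lt S (pow_pos hp s))
  rw [mod_pow_eq_digitRev_iff hp htu hpos, ← Nat.div_eq_div_iff_of_dvd (pow_pos hp u) hS,
    Nat.div_eq_div_iff_div_mul_and_mod_mul_div (j * p ^ s + digitRev p s q) S (p ^ u) (p ^ t),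
    ← hN, hcol, hrow]
  exact and_congr_left' eq_comm

section blockStart

variable {m : ℕ} (n : Fin m → ℕ)

def blockStart (i : Fin m) : ℕ :=
  ∑ k : Fin i, n (Fin.castLE i.2.le k)

theorem blockStart_lt_sum {i : Fin m} (hi : 0 < n i) : blockStart n i < ∑ k, n k := by
  simpa [blockStart] using (finSigmaFinEquiv (n := n) ⟨i, ⟨0, hi⟩⟩).isLt

theorem dvd_blockStart {d : ℕ} {i : Fin m} (h : ∀ k < i, d ∣ n k) : d ∣ blockStart n i :=
  Finset.dvd_sum fun k _ => h _ (Fin.lt_def.mpr k.isLt)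

theorem existsUnique_mem_block {x : ℕ} (hx : x < ∑ k, n k) :
    ∃! i : Fin m, blockStart n i ≤ x ∧ x < blockStart n i + n i := by
  obtain ⟨⟨i, a⟩, hia⟩ := finSigmaFinEquiv.surjective (⟨x, hx⟩ : Fin (∑ k, n k))
  have hx_eq : blockStart n i + a = x := by
    simpa only [blockStart, finSigmaFinEquiv_apply] using congrArg Fin.val hia
  refine ⟨i, ⟨by omega, by omega⟩, fun i' ⟨h₁, h₂⟩ => ?_⟩
  have hx_eq' : finSigmaFinEquiv
      (⟨i', ⟨x - blockStart n i', by omega⟩⟩ : (k : Fin m) × Fin (n k)) = ⟨x, hx⟩ := by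
    ext
    rw [finSigmaFinEquiv_apply]
    exact Nat.add_sub_of_le h₁
  exact congrArg Sigma.fst (finSigmaFinEquiv.injective (hx_eq'.trans hia.symm))

end blockStart

theorem training_sequence_construction_of_prime_power_general
    (p : ℕ) (hp : p.Prime) (s : ℕ) (G : ℕ) (hG : G = p ^ s)
    (Mp nd : ℕ)
    (g : Fin nd → ℕ)
    (hmono : ∀ i j : Fin nd, i ≤ j → g i ≤ g j)
    (hdvd : ∀ i, g i ∣ G)
    (hsum : ∑ i, G / g i = G * Mp) :
    ∃ (col : Fin nd → Fin Mp) (r : Fin nd → ℕ),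
      (∀ i, r i < g i) ∧
      ∀ (q : ℕ) (j : Fin Mp), q < G →
        ∃! i : Fin nd, col i = j ∧ q % g i = r i := by
  subst hG
  choose t ht hgt using fun i => (Nat.dvd_prime_pow hp).mp (hdvd i)
  set L : Fin nd → ℕ := fun i => p ^ (s - t i)
  have hL_sum : ∑ i, L i = p ^ s * Mp := by
    rw [← hsum]
    exact Finset.sum_congr rfl fun i _ => by rw [hgt i, Nat.pow_div (ht i) hp.pos]
  have hL_dvd : ∀ i, L i ∣ blockStart L i := fun i => dvd_blockStart L fun k hk =>
    pow_dvd_pow p <| Nat.sub_le_sub_left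
      ((Nat.pow_le_pow_iff_right hp.one_lt).mp (hgt k ▸ hgt i ▸ hmono k i hk.le)) s
  refine ⟨fun i => ⟨blockStart L i / p ^ s, Nat.div_lt_of_lt_mul ?_⟩,
    fun i => digitRev p (t i) (blockStart L i % p ^ s / L i), fun i => ?_, fun q j _ => ?_⟩
  · exact hL_sum ▸ blockStart_lt_sum L (pow_pos hp.pos _)
  · exact hgt i ▸ digitRev_lt hp.pos _ _
  · have hx : j * p ^ s + digitRev p s q < ∑ i, L i := by
      rw [hL_sum]
      nlinarith [j.isLt, digitRev_lt hp.pos s q]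
    convert existsUnique_mem_block L hx using 2 with i
    rw [Fin.ext_iff, hgt i]
    exact segment_mem_iff hp.pos (Nat.add_sub_cancel' (ht i)) (hL_dvd i)

/-- (Proposition 3) For G = p^s and divisors g₁ ≤ … ≤ g_{n_d} of G with
Σ G/gᵢ = G·M_p, a G×M_p training sequence matrix can be constructed: there are
column assignments and residues such that every cell (q, j) is filled by
exactly one training signal i with col(i) = j and q ≡ rᵢ (mod gᵢ). -/
theorem training_sequence_construction_of_prime_power
    (p : ℕ) (hp : p.Prime) (s : ℕ) (G : ℕ) (hG : G = p ^ s)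
    (Mp nd : ℕ) (hMp : 0 < Mp) (hnd : 0 < nd)
    (g : Fin nd → ℕ)
    (hpos : ∀ i, 1 ≤ g i)
    (hmono : ∀ i j : Fin nd, i ≤ j → g i ≤ g j)
    (hdvd : ∀ i, g i ∣ G)
    (hsum : ∑ i, G / g i = G * Mp) :
    ∃ (col : Fin nd → Fin Mp) (r : Fin nd → ℕ),
      (∀ i, r i < g i) ∧
      ∀ (q : ℕ) (j : Fin Mp), q < G →
        ∃! i : Fin nd, col i = j ∧ q % g i = r i :=
  training_sequence_construction_of_prime_power_general p hp s G hG Mp nd g hmono hdvd hsum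
end
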